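/- Let X be a Banach lattice. Then X is uniformly monotone for orthogonal elements if and only if X has the strong Bishop–Phelps–Bollobás property for positive functionals. -/

import Mathlib

/-!
If `X` is UMOE, let `f ≥ 0` with `‖f‖ = 1` almost attain its norm at `x₀`. Ekeland's principle
applied to `f` on `D = {z | ‖z⁺‖ ≤ 1}` gives a point `v` near `x₀` such that `v` plus the open
Bishop–Phelps cone `{z | s‖z‖ < f z}` misses `D`; a functional separating the two supports `D` at
`v`, so it is positive (since `D - X₊ ⊆ D`) and attains its norm at `v⁺`, and Phelps' estimate
makes it close to `f`. Then `v⁺` is close to `x₀⁺`, which is close to `x₀` by UMOE because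
`‖x₀⁺‖ ≥ f x₀ ≈ 1`.

Conversely, if `‖x⁺‖ ≈ 1`, Hahn–Banach with the sublinear functional `z ↦ ‖z⁺‖` gives a positive
norm-one `f` with `f x = ‖x⁺‖`. It almost attains its norm at `x / ‖x‖`, so some `y ≥ 0` is close
to `x / ‖x‖`, and `‖x⁻‖ ≤ ‖(x / ‖x‖)⁻‖ ≤ ‖y - x / ‖x‖‖`.
-/

/-- A Banach lattice is *uniformly monotone for orthogonal elements* (UMOE) if for every
`0 < ε < 1` there is `0 < δ < ε` such that `‖x‖ ≤ 1` and `‖x⁺‖ > 1 - δ` imply `‖x⁻‖ < ε`. -/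
def UniformlyMonotoneOrthogonal (X : Type*) [NormedAddCommGroup X] [Lattice X] [IsOrderedAddMonoid X] [HasSolidNorm X] : Prop :=
  ∀ ε : ℝ, 0 < ε → ε < 1 → ∃ δ : ℝ, 0 < δ ∧ δ < ε ∧
    ∀ x : X, ‖x‖ ≤ 1 → 1 - δ < ‖x ⊔ 0‖ → ‖(-x) ⊔ 0‖ < ε

/-- The *strong Bishop–Phelps–Bollobás property for positive functionals*: the BPB property
for positive functionals in which the new norm-attaining point `y` can be chosen positive. -/
def StrongBPBppPositive (X : Type*) [NormedAddCommGroup X] [Lattice X] [IsOrderedAddMonoid X] [HasSolidNorm X] [NormedSpace ℝ X] : Prop :=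
  ∀ ε : ℝ, 0 < ε → ε < 1 → ∃ η : ℝ, 0 < η ∧ η < ε ∧
    ∀ f : X →L[ℝ] ℝ, (∀ z : X, 0 ≤ z → 0 ≤ f z) → ‖f‖ = 1 →
      ∀ x₀ : X, ‖x₀‖ = 1 → 1 - η < f x₀ →
        ∃ (y : X) (g : X →L[ℝ] ℝ), 0 ≤ y ∧ ‖y‖ = 1 ∧
          (∀ z : X, 0 ≤ z → 0 ≤ g z) ∧ ‖g‖ = 1 ∧
          g y = 1 ∧ ‖y - x₀‖ < ε ∧ ‖g - f‖ < ε

open Set Metric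

section Ekeland

variable {α : Type*} [MetricSpace α] {f : α → ℝ} {s : ℝ}

def ekelandSet (f : α → ℝ) (s : ℝ) (u : α) : Set α := {w | s * dist w u ≤ f w - f u}

lemma mem_ekelandSet {u w : α} : w ∈ ekelandSet f s u ↔ s * dist w u ≤ f w - f u := Iff.rfl

lemma self_mem_ekelandSet (u : α) : u ∈ ekelandSet f s u := by
  simp [mem_ekelandSet]

lemma ekelandSet_subset_of_mem (hs : 0 ≤ s) {u u' : α} (hu' : u' ∈ ekelandSet f s u) :
    ekelandSet f s u' ⊆ ekelandSet f s u := fun w hw => by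
  have := mul_le_mul_of_nonneg_left (dist_triangle w u' u) hs
  rw [mem_ekelandSet] at hu' hw ⊢
  linarith

lemma isClosed_ekelandSet (hf : Continuous f) (u : α) : IsClosed (ekelandSet f s u) :=
  isClosed_le (by fun_prop) (by fun_prop)

lemma exists_ekelandSet_subset_closedBall (hs : 0 < s) (hbdd : BddAbove (range f)) (u : α)
    {r : ℝ} (hr : 0 < r) : ∃ u' ∈ ekelandSet f s u, ekelandSet f s u' ⊆ closedBall u' r := by
  have hne : (f '' ekelandSet f s u).Nonempty := ⟨f u, u, self_mem_ekelandSet u, rfl⟩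
  obtain ⟨_, ⟨u', hu', rfl⟩, hlt⟩ :=
    exists_lt_of_lt_csSup hne (sub_lt_self _ (mul_pos hs hr))
  refine ⟨u', hu', fun w hw => ?_⟩
  have hfw : f w ≤ sSup (f '' ekelandSet f s u) :=
    le_csSup (hbdd.mono (image_subset_range _ _)) ⟨w, ekelandSet_subset_of_mem hs.le hu' hw, rfl⟩
  rw [mem_ekelandSet] at hw
  rw [mem_closedBall]
  nlinarith

lemma exists_seq_ekelandSet (hs : 0 < s) (hbdd : BddAbove (range f)) (x₀ : α) :
    ∃ u : ℕ → α, u 0 = x₀ ∧ (∀ n, u (n + 1) ∈ ekelandSet f s (u n)) ∧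
      ∀ n, ekelandSet f s (u (n + 1)) ⊆ closedBall (u (n + 1)) ((1 / 2) ^ n) := by
  choose T hT using fun (n : ℕ) (u : α) =>
    exists_ekelandSet_subset_closedBall hs hbdd u (pow_pos (one_half_pos (α := ℝ)) n)
  exact ⟨fun n => Nat.rec x₀ T n, rfl, fun n => (hT n _).1, fun n => (hT n _).2⟩

/-- Ekeland's variational principle. -/
theorem exists_mem_ekelandSet_forall_lt_add_dist [CompleteSpace α] (hf : Continuous f)
    (hbdd : BddAbove (range f)) (hs : 0 < s) (x₀ : α) :
    ∃ v ∈ ekelandSet f s x₀, ∀ w ≠ v, f w < f v + s * dist w v := by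
  obtain ⟨u, hu0, hu_succ, hu_ball⟩ := exists_seq_ekelandSet hs hbdd x₀
  have hu_anti : ∀ n k, n ≤ k → ekelandSet f s (u k) ⊆ ekelandSet f s (u n) := by
    intro n k hnk
    induction k, hnk using Nat.le_induction with
    | base => exact subset_rfl
    | succ k _ ih => exact (ekelandSet_subset_of_mem hs.le (hu_succ k)).trans ih
  have hu_mem : ∀ n k, n ≤ k → u k ∈ ekelandSet f s (u n) :=
    fun n k hnk => hu_anti n k hnk (self_mem_ekelandSet _)
  have hsmall : ∀ {ε : ℝ}, 0 < ε → ∃ n : ℕ, (1 / 2 : ℝ) ^ n < ε :=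
    fun hε => exists_pow_lt_of_lt_one hε one_half_lt_one
  have hcauchy : CauchySeq u := by
    refine Metric.cauchySeq_iff'.2 fun ε hε => ?_
    obtain ⟨n, hn⟩ := hsmall hε
    exact ⟨n + 1, fun k hk => (hu_ball n (hu_mem _ k hk)).trans_lt hn⟩
  obtain ⟨v, hv⟩ := cauchySeq_tendsto_of_complete hcauchy
  have hv_mem : ∀ n, v ∈ ekelandSet f s (u n) := fun n =>
    (isClosed_ekelandSet hf _).mem_of_tendsto hv
      (Filter.eventually_atTop.2 ⟨n, fun k hk => hu_mem n k hk⟩)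
  refine ⟨v, hu0 ▸ hv_mem 0, fun w hwv => ?_⟩
  by_contra! hle
  have hw_mem : ∀ n, w ∈ ekelandSet f s (u n) := fun n =>
    ekelandSet_subset_of_mem hs.le (hv_mem n) (mem_ekelandSet.2 (by linarith))
  obtain ⟨n, hn⟩ := hsmall (half_pos (dist_pos.2 hwv))
  have := dist_triangle_right w v (u (n + 1))
  have := hu_ball n (hw_mem (n + 1))
  have := hu_ball n (hv_mem (n + 1))
  rw [mem_closedBall] at *
  linarith

end Ekeland

lemma le_of_forall_pos_add_mul_lt {a b c : ℝ} (h : ∀ t : ℝ, 0 < t → a + t * b < c) : a ≤ c := by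
  by_contra! hca
  have ht : 0 < (a - c) / (|b| + 1) := by positivity
  have hb : -(|b| * ((a - c) / (|b| + 1))) ≤ (a - c) / (|b| + 1) * b := by
    nlinarith [neg_abs_le b]
  have : |b| * ((a - c) / (|b| + 1)) < a - c := by
    rw [mul_div_assoc', div_lt_iff₀ (by positivity)]
    nlinarith [abs_nonneg b]
  linarith [h _ ht]

section BishopPhelps

variable {E : Type*} [NormedAddCommGroup E] [NormedSpace ℝ E]

lemma convex_setOf_mul_norm_sub_lt (f : E →L[ℝ] ℝ) {s : ℝ} (hs : 0 ≤ s) (v : E) :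
    Convex ℝ {w | s * ‖w - v‖ < f w - f v} := by
  intro w hw w' hw' a b ha hb hab
  change s * ‖w - v‖ < f w - f v at hw
  change s * ‖w' - v‖ < f w' - f v at hw'
  have hsplit : a • w + b • w' - v = a • (w - v) + b • (w' - v) := by
    rw [smul_sub, smul_sub, sub_add_sub_comm, ← add_smul, hab, one_smul]
  have hnorm : ‖a • (w - v) + b • (w' - v)‖ ≤ a * ‖w - v‖ + b * ‖w' - v‖ := by
    refine (norm_add_le _ _).trans_eq ?_
    rw [norm_smul, norm_smul, Real.norm_of_nonneg ha, Real.norm_of_nonneg hb]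
  have hcomb : a * (s * ‖w - v‖) + b * (s * ‖w' - v‖) < a * (f w - f v) + b * (f w' - f v) := by
    rcases ha.eq_or_lt with rfl | ha'
    · rw [zero_add] at hab
      simpa [hab] using hw'
    · exact add_lt_add_of_lt_of_le (mul_lt_mul_of_pos_left hw ha')
        (mul_le_mul_of_nonneg_left hw'.le hb)
  show s * ‖a • w + b • w' - v‖ < f (a • w + b • w') - f v
  have hfv : f v = a * f v + b * f v := by rw [← add_mul, hab, one_mul]
  rw [hsplit, map_add, map_smul, map_smul, smul_eq_mul, smul_eq_mul]
  nlinarith [mul_le_mul_of_nonneg_left hnorm hs]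

theorem exists_support_nonneg_on_cone [CompleteSpace E] {D : Set E} (hDc : IsClosed D)
    (hD : Convex ℝ D) {f : E →L[ℝ] ℝ} (hbdd : BddAbove (f '' D)) {x₀ : E} (hx₀ : x₀ ∈ D)
    {s : ℝ} (hs : 0 < s) {x₁ : E} (hx₁ : s * ‖x₁‖ < f x₁) :
    ∃ v ∈ D, s * ‖v - x₀‖ ≤ f v - f x₀ ∧ ∃ h : E →L[ℝ] ℝ,
      0 < h x₁ ∧ IsMaxOn h D v ∧ ∀ z, s * ‖z‖ ≤ f z → 0 ≤ h z := by
  have : CompleteSpace D := hDc.completeSpace_coe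
  obtain ⟨⟨v, hvD⟩, hvx₀, hvmax⟩ := exists_mem_ekelandSet_forall_lt_add_dist
    (f := fun w : D => f w) (by fun_prop) (by rwa [← image_eq_range]) hs ⟨x₀, hx₀⟩
  -- `U` is `v` plus the open Bishop–Phelps cone of `f`; Ekeland's choice of `v` makes it miss `D`.
  set U : Set E := {w | s * ‖w - v‖ < f w - f v}
  have hUD : Disjoint U D := by
    refine disjoint_left.2 fun w hwU hwD => ?_
    have hwv : (⟨w, hwD⟩ : D) ≠ ⟨v, hvD⟩ := by
      rintro ⟨⟩
      simp [U] at hwU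
    have hlt : f w < f v + s * ‖w - v‖ := by
      simpa [Subtype.dist_eq, dist_eq_norm] using hvmax _ hwv
    have hgt : s * ‖w - v‖ < f w - f v := hwU
    linarith
  obtain ⟨g, c, hgU, hgD⟩ := geometric_hahn_banach_open (convex_setOf_mul_norm_sub_lt f hs.le v)
    (isOpen_lt (by fun_prop) (by fun_prop)) hD hUD
  have hcone : ∀ z, s * ‖z‖ ≤ f z → ∀ t : ℝ, 0 < t → g v + g z + t * g x₁ < c := by
    intro z hz t ht
    have hmem : v + z + t • x₁ ∈ U := by
      have := norm_add_le z (t • x₁)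
      rw [norm_smul, Real.norm_eq_abs, abs_of_pos ht] at this
      show s * ‖v + z + t • x₁ - v‖ < f (v + z + t • x₁) - f v
      simp only [add_sub_cancel_left, add_assoc, map_add, map_smul, smul_eq_mul]
      nlinarith
    simpa [add_assoc] using hgU _ hmem
  have hgv : g v ≤ c := le_of_forall_pos_add_mul_lt (by simpa using hcone 0 (by simp))
  have hcv : c ≤ g v := hgD v hvD
  have hvx₀' : s * ‖v - x₀‖ ≤ f v - f x₀ := by
    simpa [Subtype.dist_eq, dist_eq_norm, mem_ekelandSet] using hvx₀
  refine ⟨v, hvD, hvx₀', -g, ?_, ?_, ?_⟩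
  · have := hcone 0 (by simp) 1 one_pos
    simp only [map_zero, add_zero, one_mul] at this
    simp only [neg_apply]
    linarith
  · refine isMaxOn_iff.2 fun b hb => ?_
    simp only [neg_apply, neg_le_neg_iff]
    linarith [hgD b hb]
  · intro z hz
    have := le_of_forall_pos_add_mul_lt (hcone z hz)
    simp only [neg_apply, neg_nonneg]
    linarith

end BishopPhelps

section Phelps

variable {E : Type*} [NormedAddCommGroup E] [NormedSpace ℝ E]

lemma exists_mul_norm_lt_apply {f : E →L[ℝ] ℝ} {s : ℝ} (hs : 0 ≤ s) (hf : s < ‖f‖) :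
    ∃ x, s * ‖x‖ < f x := by
  obtain ⟨x, hx, hfx⟩ := f.exists_lt_apply_of_lt_opNorm hf
  rcases le_or_gt 0 (f x) with h | h
  · rw [Real.norm_of_nonneg h] at hfx
    exact ⟨x, by nlinarith [norm_nonneg x]⟩
  · rw [Real.norm_of_nonpos h.le] at hfx
    exact ⟨-x, by rw [norm_neg, map_neg]; nlinarith [norm_nonneg x]⟩

lemma abs_apply_le_one {f : E →L[ℝ] ℝ} (hf : ‖f‖ ≤ 1) {z : E} (hz : ‖z‖ ≤ 1) : |f z| ≤ 1 :=
  (f.le_opNorm z).trans (mul_le_one₀ hf (norm_nonneg z) hz)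

variable {f g : E →L[ℝ] ℝ} {y : E} {η s : ℝ}

lemma sub_le_mul_apply_of_nonneg_on_cone (hy : ‖y‖ ≤ 1) (hs : 0 ≤ s) (hηs : η + s < 1)
    (hfy : 1 - η ≤ f y) (hgy : g y = 1) (hg : ∀ z, s * ‖z‖ ≤ f z → 0 ≤ g z) {z : E}
    (hz : ‖z‖ ≤ 1) (hfz : f z ≤ s) : f z - s ≤ g z * (1 - η - s) := by
  set r := (s - f z) / (1 - η - s)
  have hr : 0 ≤ r := div_nonneg (by linarith) (by linarith)
  have hr_mul : r * (1 - η - s) = s - f z := div_mul_cancel₀ _ (by linarith)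
  have hmem : s * ‖z + r • y‖ ≤ f (z + r • y) := by
    have := norm_add_le z (r • y)
    rw [norm_smul, Real.norm_of_nonneg hr] at this
    rw [map_add, map_smul, smul_eq_mul]
    nlinarith [mul_le_mul_of_nonneg_left hy hr, mul_le_mul_of_nonneg_left hfy hr]
  have := hg _ hmem
  rw [map_add, map_smul, hgy, smul_eq_mul, mul_one] at this
  nlinarith

lemma apply_sub_apply_le_of_nonneg_on_cone (hf : ‖f‖ ≤ 1) (hy : ‖y‖ ≤ 1) (hη : 0 ≤ η)
    (hηs : η ≤ s) (hsη : η + s < 1) (hfy : 1 - η ≤ f y) (hgy : g y = 1)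
    (hg : ∀ z, s * ‖z‖ ≤ f z → 0 ≤ g z) {z : E} (hz : ‖z‖ ≤ 1) :
    f z - g z ≤ (2 * s + η) / (1 - η - s) := by
  have hs : 0 ≤ s := hη.trans hηs
  have hfz := abs_le.1 (abs_apply_le_one hf hz)
  have hfy1 := (abs_le.1 (abs_apply_le_one hf hy)).2
  rw [le_div_iff₀ (by linarith)]
  rcases le_or_gt (f z) s with hzs | hzs
  · have := sub_le_mul_apply_of_nonneg_on_cone hy hs hsη hfy hgy hg hz hzs
    nlinarith
  · set w : E := (1 / 2 : ℝ) • (z - f z • y)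
    have hw : ‖w‖ ≤ 1 := by
      have := norm_sub_le z (f z • y)
      rw [norm_smul, Real.norm_of_nonneg (by linarith)] at this
      rw [norm_smul, Real.norm_of_nonneg (by norm_num)]
      nlinarith [mul_le_mul_of_nonneg_left hy (show 0 ≤ f z by linarith)]
    have hfw : f w = 1 / 2 * (f z * (1 - f y)) := by
      simp only [w, map_smul, map_sub, smul_eq_mul]
      ring
    have hgw : g w = 1 / 2 * (g z - f z) := by
      simp only [w, map_smul, map_sub, hgy, smul_eq_mul]
      ring
    have hfw0 : 0 ≤ f w := by rw [hfw]; nlinarith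
    have hfws : f w ≤ s := by rw [hfw]; nlinarith
    have := sub_le_mul_apply_of_nonneg_on_cone hy hs hsη hfy hgy hg hw hfws
    rw [hgw] at this
    nlinarith

/-- Phelps' estimate. -/
theorem norm_sub_le_of_nonneg_on_cone (hf : ‖f‖ ≤ 1) (hy : ‖y‖ ≤ 1) (hη : 0 ≤ η)
    (hηs : η ≤ s) (hsη : η + s < 1) (hfy : 1 - η ≤ f y) (hgy : g y = 1)
    (hg : ∀ z, s * ‖z‖ ≤ f z → 0 ≤ g z) : ‖g - f‖ ≤ (2 * s + η) / (1 - η - s) := by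
  refine ContinuousLinearMap.opNorm_le_of_unit_norm
    (div_nonneg (by linarith) (by linarith)) fun z hz => ?_
  have h₁ := apply_sub_apply_le_of_nonneg_on_cone hf hy hη hηs hsη hfy hgy hg hz.le
  have h₂ := apply_sub_apply_le_of_nonneg_on_cone hf hy hη hηs hsη hfy hgy hg
    ((norm_neg z).trans hz).le
  rw [map_neg, map_neg] at h₂
  rw [sub_apply, Real.norm_eq_abs, abs_le]
  constructor <;> linarith

end Phelps

section PosPart

variable {X : Type*} [AddCommGroup X] [Lattice X] [Module ℝ X] [PosSMulMono ℝ X]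

lemma posPart_smul_of_nonneg {c : ℝ} (hc : 0 ≤ c) (x : X) : (c • x)⁺ = c • x⁺ := by
  rcases hc.eq_or_lt with rfl | hc
  · simp
  · have : c • (x ⊔ 0) = c • x ⊔ c • 0 := (OrderIso.smulRight (β := X) hc).map_sup x 0
    rw [posPart_def, posPart_def, this, smul_zero]

lemma negPart_smul_of_nonneg {c : ℝ} (hc : 0 ≤ c) (x : X) : (c • x)⁻ = c • x⁻ := by
  rw [← posPart_neg, ← smul_neg, posPart_smul_of_nonneg hc, posPart_neg]

end PosPart

lemma norm_posPart_smul_of_nonneg {X : Type*} [NormedAddCommGroup X] [Lattice X]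
    [NormedSpace ℝ X] [PosSMulMono ℝ X] {c : ℝ} (hc : 0 ≤ c) (x : X) :
    ‖(c • x)⁺‖ = c * ‖x⁺‖ := by
  rw [posPart_smul_of_nonneg hc, norm_smul, Real.norm_of_nonneg hc]

section PositiveFunctional

variable {X : Type*} [NormedAddCommGroup X] [Lattice X] [IsOrderedAddMonoid X] [NormedSpace ℝ X]
  {f : X →L[ℝ] ℝ}

lemma apply_le_apply_posPart (hf : ∀ z, 0 ≤ z → 0 ≤ f z) (x : X) : f x ≤ f x⁺ :=
  calc f x = f x⁺ - f x⁻ := by rw [← map_sub, posPart_sub_negPart]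
    _ ≤ f x⁺ := sub_le_self _ (hf _ (negPart_nonneg x))

lemma apply_le_norm_posPart (hf : ∀ z, 0 ≤ z → 0 ≤ f z) (hf₁ : ‖f‖ ≤ 1) (x : X) :
    f x ≤ ‖x⁺‖ :=
  (apply_le_apply_posPart hf x).trans ((le_abs_self _).trans <|
    (f.le_opNorm _).trans (mul_le_of_le_one_left (norm_nonneg _) hf₁))

end PositiveFunctional

section SolidNorm

variable {X : Type*} [NormedAddCommGroup X] [Lattice X] [IsOrderedAddMonoid X] [HasSolidNorm X]

lemma norm_le_norm_of_nonneg_of_le' {a b : X} (ha : 0 ≤ a) (hab : a ≤ b) : ‖a‖ ≤ ‖b‖ :=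
  norm_le_norm_of_abs_le_abs (by rwa [abs_of_nonneg ha, abs_of_nonneg (ha.trans hab)])

lemma norm_posPart_le (x : X) : ‖x⁺‖ ≤ ‖x‖ := by
  rw [← norm_abs_eq_norm x]
  exact norm_le_norm_of_nonneg_of_le' (posPart_nonneg x) (sup_le (le_abs_self x) (abs_nonneg x))

lemma norm_posPart_add_le (x y : X) : ‖(x + y)⁺‖ ≤ ‖x⁺‖ + ‖y⁺‖ :=
  (norm_le_norm_of_nonneg_of_le' (posPart_nonneg _) (sup_le (add_le_add (le_posPart x)
    (le_posPart y)) (add_nonneg (posPart_nonneg x) (posPart_nonneg y)))).trans (norm_add_le _ _)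

lemma norm_negPart_le_norm_sub {y : X} (hy : 0 ≤ y) (x : X) : ‖x⁻‖ ≤ ‖y - x‖ := by
  have := norm_sup_sub_sup_le_norm (-x) (-y) 0
  rwa [sup_eq_right.2 (neg_nonpos.2 hy), sub_zero, neg_sub_neg] at this

lemma isClosed_setOf_norm_posPart_le_one : IsClosed {z : X | ‖z⁺‖ ≤ 1} :=
  isClosed_le (by fun_prop) continuous_const

variable [NormedSpace ℝ X] {h : X →L[ℝ] ℝ} {v : X}

lemma IsMaxOn.apply_nonneg_of_nonneg (hmax : IsMaxOn h {z : X | ‖z⁺‖ ≤ 1} v)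
    (hv : ‖v⁺‖ ≤ 1) {z : X} (hz : 0 ≤ z) : 0 ≤ h z := by
  have hmem : ‖(v - z)⁺‖ ≤ 1 := (norm_le_norm_of_nonneg_of_le' (posPart_nonneg _)
    (posPart_mono (sub_le_self v hz))).trans hv
  have := hmax hmem
  rw [mem_ofPred_eq, map_sub] at this
  linarith

lemma IsMaxOn.apply_posPart_eq_opNorm (hmax : IsMaxOn h {z : X | ‖z⁺‖ ≤ 1} v)
    (hv : ‖v⁺‖ ≤ 1) : h v⁺ = ‖h‖ ∧ (h ≠ 0 → ‖v⁺‖ = 1) := by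
  have hmem : ∀ z : X, ‖z‖ ≤ 1 → ‖z⁺‖ ≤ 1 := fun z hz => (norm_posPart_le z).trans hz
  have hnorm : ‖h‖ ≤ h v := by
    refine ContinuousLinearMap.opNorm_le_of_unit_norm ?_ fun z hz => ?_
    · simpa using hmax (show ‖(0 : X)⁺‖ ≤ 1 by simp)
    · have h₁ : h z ≤ h v := hmax (hmem z hz.le)
      have h₂ : h (-z) ≤ h v := hmax (hmem (-z) (by rw [norm_neg, hz]))
      rw [map_neg] at h₂
      rw [Real.norm_eq_abs, abs_le]
      constructor <;> linarith
  have hle : h v⁺ ≤ ‖h‖ * ‖v⁺‖ := (le_abs_self _).trans (h.le_opNorm _)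
  have hpos : h v ≤ h v⁺ :=
    apply_le_apply_posPart (fun z hz => hmax.apply_nonneg_of_nonneg hv hz) v
  refine ⟨le_antisymm (hle.trans (mul_le_of_le_one_right (norm_nonneg _) hv)) (hnorm.trans hpos),
    fun hh => hv.antisymm ?_⟩
  exact (le_mul_iff_one_le_right (norm_pos_iff.2 hh)).1 (hnorm.trans (hpos.trans hle))

variable [PosSMulMono ℝ X]

lemma convex_setOf_norm_posPart_le_one : Convex ℝ {z : X | ‖z⁺‖ ≤ 1} := by
  intro z hz z' hz' a b ha hb hab
  have := norm_posPart_add_le (a • z) (b • z')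
  rw [norm_posPart_smul_of_nonneg ha, norm_posPart_smul_of_nonneg hb] at this
  show ‖(a • z + b • z')⁺‖ ≤ 1
  nlinarith [mul_le_mul_of_nonneg_left (show ‖z⁺‖ ≤ 1 from hz) ha,
    mul_le_mul_of_nonneg_left (show ‖z'⁺‖ ≤ 1 from hz') hb]

lemma exists_linearMap_le_norm_posPart_apply_eq (x : X) :
    ∃ g : X →ₗ[ℝ] ℝ, (∀ z, g z ≤ ‖z⁺‖) ∧ g x = ‖x⁺‖ := by
  rcases eq_or_ne x 0 with rfl | hx
  · exact ⟨0, fun z => norm_nonneg _, by simp⟩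
  set φ := LinearPMap.mkSpanSingleton (σ := RingHom.id ℝ) x ‖x⁺‖ hx
  have hφ : ∀ z : φ.domain, φ z ≤ ‖(z : X)⁺‖ := by
    rintro ⟨_, hz⟩
    obtain ⟨c, rfl⟩ := Submodule.mem_span_singleton.1 hz
    rw [LinearPMap.mkSpanSingleton'_apply, RingHom.id_apply, smul_eq_mul]
    rcases le_or_gt 0 c with hc | hc
    · exact (norm_posPart_smul_of_nonneg hc x).ge
    · exact (mul_nonpos_of_nonpos_of_nonneg hc.le (norm_nonneg _)).trans (norm_nonneg _)
  obtain ⟨g, hg_ext, hg_le⟩ := exists_extension_of_le_sublinear φ (fun z => ‖z⁺‖)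
    (fun c hc z => norm_posPart_smul_of_nonneg hc.le z) norm_posPart_add_le hφ
  exact ⟨g, hg_le, (hg_ext _).trans (LinearPMap.mkSpanSingleton_apply ℝ ℝ hx _)⟩

theorem exists_pos_functional_apply_eq_norm_posPart {x : X} (hx : x⁺ ≠ 0) :
    ∃ f : X →L[ℝ] ℝ, (∀ z, 0 ≤ z → 0 ≤ f z) ∧ ‖f‖ = 1 ∧ f x = ‖x⁺‖ := by
  obtain ⟨g, hg_le, hgx⟩ := exists_linearMap_le_norm_posPart_apply_eq x
  have hg_abs : ∀ z, |g z| ≤ ‖z‖ := fun z => abs_le.2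
    ⟨by linarith [map_neg g z, hg_le (-z), norm_posPart_le (-z), norm_neg z],
      (hg_le z).trans (norm_posPart_le z)⟩
  set f := g.mkContinuous 1 fun z => by simpa using hg_abs z
  have hf_pos : ∀ z, 0 ≤ z → 0 ≤ f z := fun z hz => by
    have := hg_le (-z)
    rw [posPart_eq_zero.2 (neg_nonpos.2 hz), norm_zero, map_neg] at this
    exact neg_nonpos.1 this
  have hf₁ : ‖f‖ ≤ 1 := LinearMap.mkContinuous_norm_le _ zero_le_one _
  refine ⟨f, hf_pos, hf₁.antisymm ?_, hgx⟩
  have h := (apply_le_apply_posPart hf_pos x).trans ((le_abs_self _).trans (f.le_opNorm x⁺))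
  rw [show f x = ‖x⁺‖ from hgx] at h
  exact (le_mul_iff_one_le_left (norm_pos_iff.2 hx)).1 h

end SolidNorm

section Main

variable {X : Type*} [NormedAddCommGroup X] [Lattice X] [IsOrderedAddMonoid X] [HasSolidNorm X]
  [NormedSpace ℝ X] [PosSMulMono ℝ X]

theorem exists_pos_support_near_posPart [CompleteSpace X] {f : X →L[ℝ] ℝ}
    (hf_pos : ∀ z, 0 ≤ z → 0 ≤ f z) (hf : ‖f‖ = 1) {x₀ : X} (hx₀ : ‖x₀‖ ≤ 1) {η s : ℝ}
    (hs : 0 < s) (hη : 0 ≤ η) (hηs : η ≤ s) (hsη : η + s < 1) (hfx₀ : 1 - η ≤ f x₀) :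
    ∃ (y : X) (g : X →L[ℝ] ℝ), 0 ≤ y ∧ ‖y‖ = 1 ∧ (∀ z, 0 ≤ z → 0 ≤ g z) ∧ ‖g‖ = 1 ∧
      g y = 1 ∧ s * ‖y - x₀⁺‖ ≤ η ∧ ‖g - f‖ ≤ (2 * s + η) / (1 - η - s) := by
  set D := {z : X | ‖z⁺‖ ≤ 1}
  have hfD : ∀ z, f z ≤ ‖z⁺‖ := apply_le_norm_posPart hf_pos hf.le
  obtain ⟨x₁, hx₁⟩ := exists_mul_norm_lt_apply hs.le (show s < ‖f‖ by rw [hf]; linarith)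
  obtain ⟨v, hvD, hvx₀, h, hhx₁, hmax, hh_cone⟩ := exists_support_nonneg_on_cone
    isClosed_setOf_norm_posPart_le_one convex_setOf_norm_posPart_le_one
    ⟨1, by rintro _ ⟨z, hz, rfl⟩; exact (hfD z).trans hz⟩
    ((norm_posPart_le x₀).trans hx₀ : x₀ ∈ D) hs hx₁
  have hh : h ≠ 0 := by rintro rfl; simp at hhx₁
  obtain ⟨hhv, hv⟩ := hmax.apply_posPart_eq_opNorm hvD
  have hh_norm : 0 < ‖h‖ := norm_pos_iff.2 hh
  refine ⟨v⁺, ‖h‖⁻¹ • h, posPart_nonneg v, hv hh, fun z hz => ?_, ?_, ?_, ?_, ?_⟩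
  · exact mul_nonneg (inv_nonneg.2 hh_norm.le) (hmax.apply_nonneg_of_nonneg hvD hz)
  · rw [norm_smul, norm_inv, norm_norm, inv_mul_cancel₀ hh_norm.ne']
  · rw [smul_apply, hhv, smul_eq_mul, inv_mul_cancel₀ hh_norm.ne']
  · calc s * ‖v⁺ - x₀⁺‖ ≤ s * ‖v - x₀‖ :=
          mul_le_mul_of_nonneg_left (norm_sup_sub_sup_le_norm v x₀ 0) hs.le
      _ ≤ η := by linarith [hfD v, show ‖v⁺‖ ≤ 1 from hvD]
  · refine norm_sub_le_of_nonneg_on_cone hf.le (hv hh).le hη hηs hsη ?_ ?_ fun z hz => ?_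
    · linarith [apply_le_apply_posPart hf_pos v, mul_nonneg hs.le (norm_nonneg (v - x₀))]
    · rw [smul_apply, hhv, smul_eq_mul, inv_mul_cancel₀ hh_norm.ne']
    · exact mul_nonneg (inv_nonneg.2 hh_norm.le) (hh_cone z hz)

theorem strongBPBppPositive_of_uniformlyMonotoneOrthogonal [CompleteSpace X]
    (hX : UniformlyMonotoneOrthogonal X) : StrongBPBppPositive X := by
  intro ε hε hε₁
  obtain ⟨δ, hδ, -, hδ_neg⟩ := hX (ε / 2) (by linarith) (by linarith)
  set η := min δ (ε ^ 2 / 64)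
  have hη : 0 < η := lt_min hδ (by positivity)
  have hηε : η ≤ ε ^ 2 / 64 := min_le_right _ _
  refine ⟨η, hη, by nlinarith, fun f hf_pos hf x₀ hx₀ hfx₀ => ?_⟩
  obtain ⟨y, g, hy_pos, hy, hg_pos, hg, hgy, hyx₀, hgf⟩ :=
    exists_pos_support_near_posPart hf_pos hf hx₀.le (s := ε / 16) (by positivity) hη.le
      (by nlinarith) (by nlinarith) hfx₀.le
  have hx₀_neg : ‖x₀⁻‖ < ε / 2 := hδ_neg x₀ hx₀.le
    ((sub_le_sub_left (min_le_left _ _) 1).trans_lt (hfx₀.trans_le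
      (apply_le_norm_posPart hf_pos hf.le x₀)))
  refine ⟨y, g, hy_pos, hy, hg_pos, hg, hgy, ?_, hgf.trans_lt ?_⟩
  · calc ‖y - x₀‖ = ‖(y - x₀⁺) + x₀⁻‖ := by rw [sub_add, posPart_sub_negPart]
      _ ≤ ‖y - x₀⁺‖ + ‖x₀⁻‖ := norm_add_le _ _
      _ < ε := by nlinarith [norm_nonneg (y - x₀⁺)]
  · rw [div_lt_iff₀ (by nlinarith)]
    nlinarith

theorem uniformlyMonotoneOrthogonal_of_strongBPBppPositive (hX : StrongBPBppPositive X) :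
    UniformlyMonotoneOrthogonal X := by
  intro ε hε hε₁
  obtain ⟨η, hη, hηε, hBPB⟩ := hX ε hε hε₁
  refine ⟨η, hη, hηε, fun x hx hx_pos => ?_⟩
  have hx_pos' : x⁺ ≠ 0 := by
    rintro h
    rw [show x ⊔ 0 = x⁺ from rfl, h, norm_zero] at hx_pos
    linarith
  have hx_norm : 0 < ‖x‖ := (norm_pos_iff.2 hx_pos').trans_le (norm_posPart_le x)
  obtain ⟨f, hf_pos, hf, hfx⟩ := exists_pos_functional_apply_eq_norm_posPart hx_pos'
  set x₀ := ‖x‖⁻¹ • x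
  have hfx₀ : 1 - η < f x₀ := by
    rw [map_smul, hfx, smul_eq_mul]
    exact hx_pos.trans_le (le_mul_of_one_le_left (norm_nonneg _) (one_le_inv₀ hx_norm |>.2 hx))
  obtain ⟨y, -, hy_pos, -, -, -, -, hyx₀, -⟩ :=
    hBPB f hf_pos hf x₀ (norm_smul_inv_norm (norm_pos_iff.1 hx_norm)) hfx₀
  have hx_eq : x = ‖x‖ • x₀ := by rw [smul_inv_smul₀ hx_norm.ne']
  calc ‖x⁻‖ = ‖x‖ * ‖x₀⁻‖ := by
        rw [hx_eq, negPart_smul_of_nonneg (norm_nonneg _), norm_smul, norm_norm, ← hx_eq]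
    _ ≤ ‖x₀⁻‖ := mul_le_of_le_one_left (norm_nonneg _) hx
    _ ≤ ‖y - x₀‖ := norm_negPart_le_norm_sub hy_pos x₀
    _ < ε := hyx₀

end Main

theorem stmt3_general (X : Type*) [NormedAddCommGroup X] [Lattice X] [IsOrderedAddMonoid X] [HasSolidNorm X] [NormedSpace ℝ X]
    [PosSMulStrictMono ℝ X] [CompleteSpace X] :
    UniformlyMonotoneOrthogonal X ↔ StrongBPBppPositive X :=
  ⟨strongBPBppPositive_of_uniformlyMonotoneOrthogonal,
    uniformlyMonotoneOrthogonal_of_strongBPBppPositive⟩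

/-- A Banach lattice is uniformly monotone for orthogonal elements iff it has
the strong Bishop–Phelps–Bollobás property for positive functionals. -/
theorem stmt3 (X : Type*) [NormedAddCommGroup X] [Lattice X] [IsOrderedAddMonoid X] [HasSolidNorm X] [NormedSpace ℝ X]
    [PosSMulStrictMono ℝ X] [PosSMulReflectLT ℝ X] [CompleteSpace X] :
    UniformlyMonotoneOrthogonal X ↔ StrongBPBppPositive X :=
  stmt3_general X
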